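/- arXiv:1905.11683 — 3 statements merged into one kernel-verified Lean document; each statement's English description precedes it below -/
import Mathlib

section
/- Let Λ = diag(μ_1,…,μ_n) be invertible diagonal, and for k = 1,…,N let Λ_k be a diagonal matrix with Λ_k^N = Λ, such that for each j the (j,j) entries of Λ_1,…,Λ_N run over all N distinct N-th roots of μ_j. Define the nN×nN block matrix 𝒮 whose (p,k) block is (1/√N) Λ_k^{−(N−p)} for p = 1,…,N. Then 𝒮 𝒮† = diag((ΛΛ†)^{−(N−1)/N}, (ΛΛ†)^{−(N−2)/N}, …, (ΛΛ†)^{−1/N}, I). -/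
/-!
`𝒮` is block diagonal along the coordinate `j`. If `d₁, …, d_N` are the `N`-th roots of `μ = μ_j`,
then `|d_k|² = |μ|^{2/N}` for all `k`, so `conj d_k = |μ|^{2/N} d_k⁻¹` and the `(p, q)` entry of the
`j`-th block of `𝒮 𝒮†` is `N⁻¹ |μ|^{-2(N-1-q)/N} ∑_k d_k^{q-p}`. This power sum is `N` for `p = q`
and `0` otherwise: multiplication by a primitive `N`-th root of unity `ζ` permutes the `d_k`, so
the sum is unchanged by the factor `ζ^{q-p} ≠ 1`.
-/

open Matrix Finset Polynomial ComplexConjugate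

theorem card_nthRootsFinset_le {R : Type*} [CommRing R] [IsDomain R] (N : ℕ) (a : R) :
    #(nthRootsFinset N a) ≤ N := by
  classical
  rw [nthRootsFinset_def]
  exact (Multiset.toFinset_card_le _).trans (card_nthRoots N a)

theorem image_eq_nthRootsFinset {R : Type*} [CommRing R] [IsDomain R] [DecidableEq R] {N : ℕ}
    (hN : 0 < N) {a : R} {d : Fin N → R} (hd : ∀ k, d k ^ N = a) (hinj : Function.Injective d) :
    univ.image d = nthRootsFinset N a := by
  refine eq_of_subset_of_card_le (fun z hz => ?_) ?_
  · obtain ⟨k, -, rfl⟩ := mem_image.1 hz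
    exact (mem_nthRootsFinset hN a).2 (hd k)
  · rw [card_image_of_injective _ hinj, card_univ, Fintype.card_fin]
    exact card_nthRootsFinset_le N a

theorem sum_nthRootsFinset_zpow_eq_zero {K : Type*} [Field K] {N : ℕ} {ζ : K}
    (hζ : IsPrimitiveRoot ζ N) (a : K) {m : ℤ} (hm : ¬ (N : ℤ) ∣ m) :
    ∑ z ∈ nthRootsFinset N a, z ^ m = 0 := by
  rcases N.eq_zero_or_pos with rfl | hN
  · simp
  have hζ0 : ζ ≠ 0 := hζ.ne_zero hN.ne'
  have hζm : ζ ^ m ≠ 1 := fun h => hm ((hζ.zpow_eq_one_iff_dvd m).1 h)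
  have hmem : ∀ c : K, c ^ N = 1 → ∀ z ∈ nthRootsFinset N a, c * z ∈ nthRootsFinset N a :=
    fun c hc z hz => by simpa [hc] using mul_mem_nthRootsFinset ((mem_nthRootsFinset hN 1).2 hc) hz
  have hfix : ∑ z ∈ nthRootsFinset N a, z ^ m = ζ ^ m * ∑ z ∈ nthRootsFinset N a, z ^ m := by
    rw [mul_sum]
    refine sum_nbij' (ζ⁻¹ * ·) (ζ * ·) (hmem ζ⁻¹ (by simp [hζ.pow_eq_one])) (hmem ζ hζ.pow_eq_one)
      (fun z _ => by simp [hζ0]) (fun z _ => by simp [hζ0]) (fun z _ => ?_)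
    rw [← mul_zpow, mul_inv_cancel_left₀ hζ0]
  by_contra hsum
  exact hζm ((mul_eq_right₀ hsum).1 hfix.symm)

theorem sum_zpow_eq_zero_of_pow_eq {K : Type*} [Field K] {N : ℕ} {ζ : K}
    (hζ : IsPrimitiveRoot ζ N) {a : K} {d : Fin N → K} (hd : ∀ k, d k ^ N = a)
    (hinj : Function.Injective d) {m : ℤ} (hm : ¬ (N : ℤ) ∣ m) :
    ∑ k, d k ^ m = 0 := by
  classical
  rcases N.eq_zero_or_pos with rfl | hN
  · simp
  have := sum_nthRootsFinset_zpow_eq_zero hζ a hm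
  rwa [← image_eq_nthRootsFinset hN hd hinj, sum_image fun k _ l _ h => hinj h] at this

theorem zpow_mul_conj_zpow {z : ℂ} (hz : z ≠ 0) (i j : ℤ) :
    z ^ i * conj z ^ j = ((‖z‖ ^ 2 : ℝ) : ℂ) ^ j * z ^ (i - j) := by
  have hconj : conj z = ((‖z‖ ^ 2 : ℝ) : ℂ) * z⁻¹ := by
    rw [eq_mul_inv_iff_mul_eq₀ hz, mul_comm, Complex.mul_conj, Complex.normSq_eq_norm_sq]
  rw [hconj, mul_zpow, _root_.inv_zpow, zpow_sub₀ hz]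
  ring

theorem norm_sq_rpow_of_pow_eq {𝕜 : Type*} [NormedDivisionRing 𝕜] {z a : 𝕜} {N : ℕ}
    (hN : N ≠ 0) (h : z ^ N = a) (t : ℝ) : (‖z‖ ^ 2) ^ t = (‖a‖ ^ 2) ^ (t / N) := by
  rw [← h, norm_pow, ← pow_mul, mul_comm, pow_mul,
    ← Real.rpow_natCast_mul (x := ‖z‖ ^ 2) (by positivity),
    mul_div_cancel₀ _ (Nat.cast_ne_zero.2 hN)]

theorem sum_zpow_mul_conj_zpow_of_pow_eq {N : ℕ} {a : ℂ} (ha : a ≠ 0) {d : Fin N → ℂ}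
    (hd : ∀ k, d k ^ N = a) (hinj : Function.Injective d) {i j : ℤ} (hij : (i - j).natAbs < N) :
    ∑ k, d k ^ i * conj (d k) ^ j =
      if i = j then N * (((‖a‖ ^ 2) ^ ((j : ℝ) / N) : ℝ) : ℂ) else 0 := by
  have hN : N ≠ 0 := by omega
  have hd0 : ∀ k, d k ≠ 0 := fun k h => ha (by rw [← hd k, h, zero_pow hN])
  have hterm : ∀ k, d k ^ i * conj (d k) ^ j =
      (((‖a‖ ^ 2) ^ ((j : ℝ) / N) : ℝ) : ℂ) * d k ^ (i - j) := by
    intro k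
    rw [zpow_mul_conj_zpow (hd0 k), ← norm_sq_rpow_of_pow_eq hN (hd k), Real.rpow_intCast,
      Complex.ofReal_zpow]
  simp only [hterm, ← mul_sum]
  split_ifs with h
  · simp [h, mul_comm]
  · have hm : ¬ (N : ℤ) ∣ i - j := fun hdvd =>
      h (sub_eq_zero.1 (Int.eq_zero_of_dvd_of_natAbs_lt_natAbs hdvd (by simpa using hij)))
    rw [sum_zpow_eq_zero_of_pow_eq (Complex.isPrimitiveRoot_exp N hN) hd hinj hm, mul_zero]

/-- The diagonal block of `𝒮` belonging to one coordinate `j`, where `d k` is the `(j, j)` entry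
of `Λ_k`; rows are indexed from `0`, so row `p` carries the exponent `-(N - 1 - p)`. -/
noncomputable def rootBlock {N : ℕ} (d : Fin N → ℂ) : Matrix (Fin N) (Fin N) ℂ :=
  of fun p k => ((1 / Real.sqrt N : ℝ) : ℂ) * d k ^ (-((N - 1 - (p : ℕ) : ℕ) : ℤ))

theorem rootBlock_mul_conjTranspose {N : ℕ} {a : ℂ} (ha : a ≠ 0) {d : Fin N → ℂ}
    (hd : ∀ k, d k ^ N = a) (hinj : Function.Injective d) :
    rootBlock d * (rootBlock d)ᴴ =
      diagonal fun p : Fin N => (((‖a‖ ^ 2) ^ (-(((N - 1 - (p : ℕ) : ℕ) : ℝ) / N)) : ℝ) : ℂ) := by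
  ext p q
  set c : ℂ := ((1 / Real.sqrt N : ℝ) : ℂ)
  have hc : c * conj c = (N : ℂ)⁻¹ := by
    rw [Complex.conj_ofReal, ← Complex.ofReal_mul, ← sq, div_pow, one_pow,
      Real.sq_sqrt (Nat.cast_nonneg N)]
    push_cast
    exact one_div _
  have hentry : (rootBlock d * (rootBlock d)ᴴ) p q = c * conj c *
      ∑ k, d k ^ (-((N - 1 - (p : ℕ) : ℕ) : ℤ)) * conj (d k) ^ (-((N - 1 - (q : ℕ) : ℕ) : ℤ)) := by
    simp only [mul_apply, conjTranspose_apply, rootBlock, of_apply, mul_sum, star_mul',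
      Complex.star_def, map_zpow₀]
    exact sum_congr rfl fun k _ => by ring
  rw [hentry, sum_zpow_mul_conj_zpow_of_pow_eq ha hd hinj (by omega), hc, diagonal_apply]
  rcases eq_or_ne p q with rfl | hpq
  · rw [if_pos rfl, if_pos rfl, inv_mul_cancel_left₀ (Nat.cast_ne_zero.2 p.pos.ne')]
    push_cast
    rw [neg_div]
  · have hexp : -((N - 1 - (p : ℕ) : ℕ) : ℤ) ≠ -((N - 1 - (q : ℕ) : ℕ) : ℤ) := by
      have := Fin.val_ne_of_ne hpq
      omega
    rw [if_neg hexp, if_neg hpq, mul_zero]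

theorem S_mul_S_dagger_general (n N : ℕ)
    (μ : Fin n → ℂ) (hμ : ∀ j, μ j ≠ 0)
    (d : Fin N → Fin n → ℂ)
    (hroot : ∀ k j, (d k j) ^ N = μ j)
    (hdistinct : ∀ j, Function.Injective (fun k => d k j))
    (S : Matrix (Fin N × Fin n) (Fin N × Fin n) ℂ)
    (hS : ∀ P Q : Fin N × Fin n, S P Q =
      if P.2 = Q.2 then
        ((1 / Real.sqrt N : ℝ) : ℂ) * (d Q.1 P.2) ^ (-((N - 1 - (P.1 : ℕ) : ℕ) : ℤ))
      else 0) :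
    S * Sᴴ = fun P Q =>
      if P = Q then
        (((‖μ P.2‖ ^ 2) ^ (-(((N - 1 - (P.1 : ℕ) : ℕ) : ℝ) / N)) : ℝ) : ℂ)
      else 0 := by
  have hblock : S = blockDiagonal fun j => rootBlock fun k => d k j := by
    ext ⟨p, j⟩ ⟨k, j'⟩
    rw [hS]
    simp [blockDiagonal_apply, rootBlock]
  rw [hblock, blockDiagonal_conjTranspose, ← blockDiagonal_mul]
  simp_rw [rootBlock_mul_conjTranspose (hμ _) (hroot · _) (hdistinct _), blockDiagonal_diagonal]
  ext P Q
  rw [diagonal_apply]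

theorem S_mul_S_dagger (n N : ℕ) (hN : 0 < N)
    (μ : Fin n → ℂ) (hμ : ∀ j, μ j ≠ 0)
    (d : Fin N → Fin n → ℂ)
    (hroot : ∀ k j, (d k j) ^ N = μ j)
    (hdistinct : ∀ j, Function.Injective (fun k => d k j))
    (S : Matrix (Fin N × Fin n) (Fin N × Fin n) ℂ)
    (hS : ∀ P Q : Fin N × Fin n, S P Q =
      if P.2 = Q.2 then
        ((1 / Real.sqrt N : ℝ) : ℂ) * (d Q.1 P.2) ^ (-((N - 1 - (P.1 : ℕ) : ℕ) : ℤ))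
      else 0) :
    S * Sᴴ = fun P Q =>
      if P = Q then
        (((‖μ P.2‖ ^ 2) ^ (-(((N - 1 - (P.1 : ℕ) : ℕ) : ℝ) / N)) : ℝ) : ℂ)
      else 0 :=
  S_mul_S_dagger_general n N μ hμ d hroot hdistinct S hS
end

section
/- Let U_1,…,U_N ∈ SL(n,ℂ) and suppose U_N U_1 ⋯ U_{N−1} = Q Λ Q^{−1} with Λ = diag(μ_1,…,μ_n) and det Q = 1. Define V_k = (U_k ⋯ U_{N−1}) Q (ΛΛ†)^{−(N−k)/(2N)} for k = 1,…,N−1 and V_N = Q. Then the gauge-transformed links Ũ_k = V_k^{−1} U_k V_{k+1} (with V_{N+1} = V_1) satisfy Ũ_k = (ΛΛ†)^{1/(2N)} for k = 1,…,N−1 and Ũ_N = Λ (ΛΛ†)^{−(N−1)/(2N)}; in particular each Ũ_k is diagonal. -/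
/-!
With `W_k = U_k ⋯ U_{N-1}` one has `U_k W_{k+1} = W_k`, so in `V_k⁻¹ U_k V_{k+1}` the partial
products and `Q` cancel and only `(ΛΛ†)^{-a_k} (ΛΛ†)^{a_{k+1}}` survives, where consecutive
exponents `a_k = -(N-k)/(2N)` differ by `1/(2N)`. For the last link, `U_N W_1 = QΛQ⁻¹` leaves
`Λ (ΛΛ†)^{a_1}`.
-/

open Matrix

section Gauge

variable {m R : Type*} [Fintype m] [DecidableEq m] [CommRing R]

theorem gauge_link_of_mul_eq {U W W' Q D D' : Matrix m m R} (hW : IsUnit W.det)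
    (hQ : IsUnit Q.det) (h : U * W' = W) :
    (W * Q * D)⁻¹ * U * (W' * Q * D') = D⁻¹ * D' := by
  simp only [Matrix.mul_inv_rev, Matrix.mul_assoc]
  rw [← Matrix.mul_assoc U, h, ← Matrix.mul_assoc W⁻¹, nonsing_inv_mul W hW, Matrix.one_mul,
    ← Matrix.mul_assoc Q⁻¹, nonsing_inv_mul Q hQ, Matrix.one_mul]

theorem gauge_link_of_mul_eq_conj {U W Q Λ D : Matrix m m R} (hQ : IsUnit Q.det)
    (h : U * W = Q * Λ * Q⁻¹) : Q⁻¹ * U * (W * Q * D) = Λ * D := by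
  simp only [← Matrix.mul_assoc]
  rw [Matrix.mul_assoc Q⁻¹, h]
  simp only [Matrix.mul_assoc, nonsing_inv_mul Q hQ, Matrix.mul_one]
  rw [← Matrix.mul_assoc Q⁻¹, nonsing_inv_mul Q hQ, Matrix.one_mul]

end Gauge

section DiagonalRpow

variable {ι : Type*} [DecidableEq ι]

noncomputable def diagonalRpow (c : ι → ℝ) (α : ℝ) : Matrix ι ι ℂ :=
  diagonal fun j => ((c j ^ α : ℝ) : ℂ)

theorem diagonalRpow_zero (c : ι → ℝ) : diagonalRpow c 0 = 1 := by
  simp [diagonalRpow]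

variable [Fintype ι]

theorem diagonalRpow_add {c : ι → ℝ} (hc : ∀ j, 0 < c j) (α β : ℝ) :
    diagonalRpow c (α + β) = diagonalRpow c α * diagonalRpow c β := by
  simp only [diagonalRpow, diagonal_mul_diagonal, Real.rpow_add (hc _), Complex.ofReal_mul]

theorem inv_diagonalRpow {c : ι → ℝ} (hc : ∀ j, 0 < c j) (α : ℝ) :
    (diagonalRpow c α)⁻¹ = diagonalRpow c (-α) :=
  inv_eq_left_inv <| by rw [← diagonalRpow_add hc, neg_add_cancel, diagonalRpow_zero]

theorem inv_diagonalRpow_mul {c : ι → ℝ} (hc : ∀ j, 0 < c j) (α β : ℝ) :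
    (diagonalRpow c α)⁻¹ * diagonalRpow c β = diagonalRpow c (β - α) := by
  rw [inv_diagonalRpow hc, ← diagonalRpow_add hc, neg_add_eq_sub]

end DiagonalRpow

theorem optimal_gauge_cooling_diagonal (n N : ℕ) (hN : 0 < N) [NeZero N]
    (U : Fin N → Matrix (Fin n) (Fin n) ℂ) (hU : ∀ k, (U k).det = 1)
    (μ : Fin n → ℂ) (Q : Matrix (Fin n) (Fin n) ℂ) (hQ : Q.det = 1)
    -- `W k` is the partial product `U k * U (k+1) * ⋯ * U (N-2)`, with `W (N-1) = 1`:
    (W : ℕ → Matrix (Fin n) (Fin n) ℂ)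
    (hW1 : W (N - 1) = 1)
    (hW2 : ∀ k (hk : k < N - 1), W k = U ⟨k, by omega⟩ * W (k + 1))
    -- diagonalization `U_N U_1 ⋯ U_{N-1} = Q Λ Q⁻¹`:
    (hdiag : U ⟨N - 1, by omega⟩ * W 0 = Q * Matrix.diagonal μ * Q⁻¹)
    -- `Dp α` is the entrywise real power `(Λ Λ†)^α`:
    (Dp : ℝ → Matrix (Fin n) (Fin n) ℂ)
    (hDp : ∀ α, Dp α = Matrix.diagonal (fun j => (((‖μ j‖ ^ 2) ^ α : ℝ) : ℂ)))
    -- the gauge transform: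
    (V : Fin N → Matrix (Fin n) (Fin n) ℂ)
    (hV : ∀ (k : Fin N) (hk : (k : ℕ) < N - 1),
      V k = W k * Q * Dp (-(((N : ℝ) - 1 - (k : ℕ)) / (2 * N))))
    (hVN : V ⟨N - 1, by omega⟩ = Q) :
    ∀ k : Fin N, (V k)⁻¹ * U k * V (k + 1) =
      if (k : ℕ) < N - 1 then Dp (1 / (2 * N))
      else Matrix.diagonal μ * Dp (-(((N : ℝ) - 1) / (2 * N))) := by
  obtain ⟨M, rfl⟩ : ∃ M, N = M + 1 := ⟨N - 1, by omega⟩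
  obtain rfl : Dp = diagonalRpow (fun j => ‖μ j‖ ^ 2) := funext hDp
  simp only [Nat.add_sub_cancel] at hW1 hW2 hV hdiag hVN ⊢
  rw [show (⟨M, M.lt_succ_self⟩ : Fin (M + 1)) = Fin.last M from rfl] at hdiag hVN
  have hWdet : ∀ k ≤ M, (W k).det = 1 := fun k hk =>
    Nat.decreasingInduction (fun j hj ih => by rw [hW2 j hj, det_mul, hU, ih, one_mul])
      (by rw [hW1, det_one]) hk
  have hQu : IsUnit Q.det := hQ ▸ isUnit_one
  -- `det Λ = 1`, so no `μ j` vanishes and `α ↦ (ΛΛ†)^α` is a one-parameter group.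
  have hμ : ∀ j, 0 < ‖μ j‖ ^ 2 := by
    have hprod : ∏ j, μ j = 1 := by
      rw [← det_diagonal, ← det_conj ((isUnit_iff_isUnit_det Q).mpr hQu), ← hdiag, det_mul, hU,
        hWdet 0 M.zero_le, one_mul]
    intro j
    have := Finset.prod_ne_zero_iff.mp (hprod ▸ one_ne_zero) j (Finset.mem_univ j)
    positivity
  have hVall : ∀ k : Fin (M + 1), V k = W k * Q * diagonalRpow (fun j => ‖μ j‖ ^ 2)
      (-((M - k) / (2 * (M + 1)))) := by
    intro k
    rcases (Fin.le_last k).lt_or_eq with hk | rfl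
    · rw [hV k hk]
      push_cast
      ring_nf
    · rw [hVN, Fin.val_last, hW1, sub_self, zero_div, neg_zero, diagonalRpow_zero,
        Matrix.one_mul, Matrix.mul_one]
  intro k
  induction k using Fin.lastCases with
  | last =>
    rw [if_neg (by simp), hVN, Fin.last_add_one, hVall 0, Fin.val_zero,
      gauge_link_of_mul_eq_conj hQu hdiag]
    push_cast
    ring_nf
  | cast i =>
    rw [if_pos (by simp), Fin.coeSucc_eq_succ, hVall, hVall, Fin.val_castSucc, Fin.val_succ,
      gauge_link_of_mul_eq (U := U i.castSucc) (hWdet i i.isLt.le ▸ isUnit_one) hQu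
        (hW2 i i.isLt).symm, inv_diagonalRpow_mul hμ]
    congr 1
    field_simp
    push_cast
    ring
end

section
/- Let A be a real number with |A| < 3√3/2. Then there exists ε_A > 0 such that for all B with |B| < ε_A, there exist constants 0 ≤ C_1 < C_2 such that the drift K_I(x,y) = −2(A sinh y cos x + B cosh y sin x + sinh 2y/(cosh 2y − cos 2x)) satisfies K_I < 0 for all x ∈ ℝ and y ∈ (C_1, C_2), and K_I > 0 for all x ∈ ℝ and y ∈ (−C_2, −C_1). -/
set_option maxHeartbeats 1000000

open Real

private lemma cube_bound (a c u u₀ s3 : ℝ) (ha : 0 ≤ a) (hc : 0 ≤ c) (hu : 1 ≤ u)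
    (huu : u ≤ u₀) (hs3 : s3 ^ 2 = 3) (hs3p : 0 < s3) (hAb : 2 * a * u₀ ^ 2 ≤ 3 * s3) :
    3 * s3 * (a * c * (u ^ 2 - c ^ 2)) + 3 * s3 - 2 * a * u₀ ^ 2 ≤ 3 * s3 * u := by
  have h1 : 0 ≤ a * ((s3 * c - u) ^ 2 * (s3 * c + 2 * u)) := by
    apply mul_nonneg ha
    apply mul_nonneg (sq_nonneg _)
    nlinarith
  have hid : 2 * a * u ^ 3 - 3 * s3 * (a * c * (u ^ 2 - c ^ 2))
      = a * ((s3 * c - u) ^ 2 * (s3 * c + 2 * u)) := by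
    linear_combination (-(a * s3 * c ^ 3)) * hs3
  have h1' : 3 * s3 * (a * c * (u ^ 2 - c ^ 2)) ≤ 2 * a * u ^ 3 := by linarith
  have h2 : 0 ≤ a * u * (u₀ ^ 2 - u ^ 2) := by
    apply mul_nonneg (mul_nonneg ha (by linarith)); nlinarith
  have h3 : 0 ≤ (3 * s3 - 2 * a * u₀ ^ 2) * (u - 1) := by
    apply mul_nonneg (by linarith) (by linarith)
  linarith [h1', h2, h3]

private lemma key_pos (A B y₀ : ℝ) (hy₀ : 0 < y₀)
    (hA : |A| * Real.cosh y₀ ^ 2 < 3 * Real.sqrt 3 / 2)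
    (hB : |B| < Real.sinh (y₀ / 2) *
      (1 - |A| * (2 * Real.cosh y₀ ^ 2) / (3 * Real.sqrt 3)) / Real.cosh y₀ ^ 3)
    (x y : ℝ) (hy1 : y₀ / 2 < y) (hy2 : y < y₀) :
    0 < A * Real.sinh y * Real.cos x + B * Real.cosh y * Real.sin x
        + Real.sinh (2 * y) / (Real.cosh (2 * y) - Real.cos (2 * x)) := by
  have hs3p : (0:ℝ) < Real.sqrt 3 := Real.sqrt_pos.mpr (by norm_num)
  have hs3sq : Real.sqrt 3 ^ 2 = 3 := Real.sq_sqrt (by norm_num)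
  set s3 := Real.sqrt 3 with hs3def
  set u₀ := Real.cosh y₀ with hu₀def
  set m := 1 - |A| * (2 * u₀ ^ 2) / (3 * s3) with hmdef
  have hu₀1 : 1 < u₀ := Real.one_lt_cosh.mpr hy₀.ne'
  have hm3 : 3 * s3 * m = 3 * s3 - |A| * (2 * u₀ ^ 2) := by
    rw [hmdef]; field_simp
  have hm : 0 < m := by
    have h : 0 < 3 * s3 * m := by rw [hm3]; nlinarith
    nlinarith
  have hy0 : 0 < y := by linarith
  have hs : 0 < Real.sinh y := Real.sinh_pos_iff.mpr hy0
  have hu1 : 1 < Real.cosh y := Real.one_lt_cosh.mpr hy0.ne'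
  set u := Real.cosh y with hudef
  have huu0 : u < u₀ := by
    rw [hudef, hu₀def]
    exact Real.cosh_lt_cosh.mpr (by rw [abs_of_pos hy0, abs_of_pos hy₀]; exact hy2)
  have hsl : Real.sinh (y₀ / 2) < Real.sinh y := Real.sinh_lt_sinh.mpr hy1
  have hsl0 : 0 < Real.sinh (y₀ / 2) := Real.sinh_pos_iff.mpr (by linarith)
  have hcos2 : Real.cos x ^ 2 ≤ 1 := Real.cos_sq_le_one x
  set D := u ^ 2 - Real.cos x ^ 2 with hDdef
  have hD : 0 < D := by rw [hDdef]; nlinarith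
  have hden : Real.cosh (2 * y) - Real.cos (2 * x) = 2 * D := by
    rw [Real.cosh_two_mul, Real.cos_two_mul, hDdef, hudef]
    have := Real.cosh_sq y
    linarith
  have hfrac : Real.sinh (2 * y) / (Real.cosh (2 * y) - Real.cos (2 * x))
      = Real.sinh y * u / D := by
    rw [hden, Real.sinh_two_mul, hudef, mul_assoc, mul_div_mul_left _ _ (two_ne_zero)]
  rw [hfrac]
  have hkey : |A| * |Real.cos x| * D + m ≤ u := by
    have h := cube_bound |A| |Real.cos x| u u₀ s3 (abs_nonneg A) (abs_nonneg _)
      hu1.le huu0.le hs3sq hs3p (by nlinarith)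
    have hc2 : |Real.cos x| ^ 2 = Real.cos x ^ 2 := sq_abs _
    have h' : 3 * s3 * (|A| * |Real.cos x| * D + m) ≤ 3 * s3 * u := by
      rw [mul_add, hm3, hDdef]
      calc 3 * s3 * (|A| * |Real.cos x| * (u ^ 2 - Real.cos x ^ 2)) +
            (3 * s3 - |A| * (2 * u₀ ^ 2))
          = 3 * s3 * (|A| * |Real.cos x| * (u ^ 2 - |Real.cos x| ^ 2)) + 3 * s3
            - 2 * |A| * u₀ ^ 2 := by rw [hc2]; ring
        _ ≤ 3 * s3 * u := h
    exact le_of_mul_le_mul_left h' (by positivity)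
  have h4 : Real.sinh y * (|A| * |Real.cos x| * D + m) / D ≤ Real.sinh y * u / D := by
    gcongr
  have hsplit : Real.sinh y * (|A| * |Real.cos x| * D + m) / D
      = |A| * |Real.cos x| * Real.sinh y + Real.sinh y * m / D := by
    field_simp
  have hA1 : -(|A| * |Real.cos x| * Real.sinh y) ≤ A * Real.sinh y * Real.cos x := by
    have h := mul_le_mul_of_nonneg_right (neg_abs_le (A * Real.cos x)) hs.le
    rw [abs_mul] at h
    nlinarith [h]
  have hB1 : -(|B| * u) ≤ B * u * Real.sin x := by
    have habs : |B * u * Real.sin x| ≤ |B| * u := by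
      rw [abs_mul, abs_mul, abs_of_pos (by linarith : (0:ℝ) < u)]
      have h2 : |Real.sin x| ≤ 1 := abs_le.mpr ⟨Real.neg_one_le_sin x, Real.sin_le_one x⟩
      have h3 : 0 ≤ |B| * u := mul_nonneg (abs_nonneg B) (by linarith)
      calc |B| * u * |Real.sin x| ≤ |B| * u * 1 := mul_le_mul_of_nonneg_left h2 h3
        _ = |B| * u := mul_one _
    linarith [neg_abs_le (B * u * Real.sin x)]
  have hDu : D ≤ u₀ ^ 2 := by rw [hDdef]; nlinarith
  have h5 : Real.sinh (y₀ / 2) * m / u₀ ^ 2 ≤ Real.sinh y * m / D :=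
    div_le_div₀ (mul_nonneg hs.le hm.le)
      (mul_le_mul_of_nonneg_right hsl.le hm.le) hD hDu
  have hbu : |B| * u ≤ |B| * u₀ := mul_le_mul_of_nonneg_left huu0.le (abs_nonneg B)
  have hfin : |B| * u₀ < Real.sinh (y₀ / 2) * m / u₀ ^ 2 := by
    have h := mul_lt_mul_of_pos_right hB (by linarith : (0:ℝ) < u₀)
    have heq : Real.sinh (y₀ / 2) * m / u₀ ^ 3 * u₀ = Real.sinh (y₀ / 2) * m / u₀ ^ 2 := by
      field_simp
    rw [heq] at h
    exact h
  linarith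

theorem confining_strip (A : ℝ) (hA : |A| < 3 * Real.sqrt 3 / 2) :
    ∃ εA > 0, ∀ B : ℝ, |B| < εA →
      ∃ C1 C2 : ℝ, 0 ≤ C1 ∧ C1 < C2 ∧
        (∀ x y : ℝ, y ∈ Set.Ioo C1 C2 →
          -2 * (A * Real.sinh y * Real.cos x + B * Real.cosh y * Real.sin x
            + Real.sinh (2 * y) / (Real.cosh (2 * y) - Real.cos (2 * x))) < 0) ∧
        (∀ x y : ℝ, y ∈ Set.Ioo (-C2) (-C1) →
          0 < -2 * (A * Real.sinh y * Real.cos x + B * Real.cosh y * Real.sin x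
            + Real.sinh (2 * y) / (Real.cosh (2 * y) - Real.cos (2 * x)))) := by
  have hs3p : (0:ℝ) < Real.sqrt 3 := Real.sqrt_pos.mpr (by norm_num)
  have hcont : ContinuousAt (fun y : ℝ => |A| * Real.cosh y ^ 2) 0 := by fun_prop
  have h0 : |A| * Real.cosh 0 ^ 2 < 3 * Real.sqrt 3 / 2 := by
    simpa using hA
  have hev := hcont.eventually_lt continuousAt_const h0
  obtain ⟨δ, hδ, hδ'⟩ := Metric.eventually_nhds_iff.mp hev
  set y₀ := δ / 2 with hy₀def
  have hy₀ : 0 < y₀ := by positivity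
  have hy₀A : |A| * Real.cosh y₀ ^ 2 < 3 * Real.sqrt 3 / 2 := by
    apply hδ'
    rw [Real.dist_eq, sub_zero, abs_of_pos hy₀]
    rw [hy₀def]; linarith
  have hu₀1 : 1 < Real.cosh y₀ := Real.one_lt_cosh.mpr hy₀.ne'
  set m := 1 - |A| * (2 * Real.cosh y₀ ^ 2) / (3 * Real.sqrt 3) with hmdef
  have hm : 0 < m := by
    rw [hmdef, sub_pos, div_lt_one (by positivity)]
    nlinarith [Real.sq_sqrt (by norm_num : (3:ℝ) ≥ 0), abs_nonneg A]
  have hsl0 : 0 < Real.sinh (y₀ / 2) := Real.sinh_pos_iff.mpr (by linarith)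
  refine ⟨Real.sinh (y₀ / 2) * m / Real.cosh y₀ ^ 3,
    div_pos (mul_pos hsl0 hm) (by positivity), fun B hB => ?_⟩
  refine ⟨y₀ / 2, y₀, by positivity, by linarith, ?_, ?_⟩
  · intro x y hy
    have h := key_pos A B y₀ hy₀ hy₀A hB x y hy.1 hy.2
    linarith
  · intro x y hy
    have h := key_pos A B y₀ hy₀ hy₀A hB (-x) (-y)
      (by have := hy.2; linarith) (by have := hy.1; linarith)
    rw [show (2:ℝ) * -y = -(2 * y) by ring, show (2:ℝ) * -x = -(2 * x) by ring] at h
    simp only [Real.sinh_neg, Real.cosh_neg, Real.cos_neg, Real.sin_neg, mul_neg,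
      neg_mul, neg_div] at h
    linarith
end
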